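/- For every fixed θ ∈ (-π/2, π/2) and all m,n ∈ ℕ, the complex Hermite polynomial J_{m,n} is an eigenfunction of the complex Ornstein–Uhlenbeck operator: L̃_θ J_{m,n}(z) = -[(m+n)cos θ + i(m-n)sin θ] · J_{m,n}(z) for all z ∈ ℂ. -/

import Mathlib

open MeasureTheory Complex Filter Finset
open scoped Real ComplexConjugate

/-- The complex Hermite polynomial `J_{m,n}`. -/
noncomputable def J (m n : ℕ) (z : ℂ) : ℂ :=
  (Real.sqrt (m.factorial * n.factorial * 2 ^ (m + n)) : ℂ)⁻¹ *
    ∑ r ∈ Finset.range (min m n + 1),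
      (-1 : ℂ) ^ r * (r.factorial : ℂ) * 2 ^ r * (m.choose r : ℂ) * (n.choose r : ℂ) *
        z ^ (m - r) * (conj z) ^ (n - r)
/-- Wirtinger derivative `∂f/∂z = (1/2)(∂f/∂x - i ∂f/∂y)`. -/
noncomputable def dz (f : ℂ → ℂ) (z : ℂ) : ℂ :=
  (1 / 2 : ℂ) * (fderiv ℝ f z 1 - Complex.I * fderiv ℝ f z Complex.I)

/-- Wirtinger derivative `∂f/∂z̄ = (1/2)(∂f/∂x + i ∂f/∂y)`. -/
noncomputable def dzbar (f : ℂ → ℂ) (z : ℂ) : ℂ :=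
  (1 / 2 : ℂ) * (fderiv ℝ f z 1 + Complex.I * fderiv ℝ f z Complex.I)

/-- The complex Ornstein–Uhlenbeck operator
`L̃_θ f = 4cosθ ∂²f/∂z∂z̄ - e^{iθ} z ∂f/∂z - e^{-iθ} z̄ ∂f/∂z̄`. -/
noncomputable def LOU (θ : ℝ) (f : ℂ → ℂ) (z : ℂ) : ℂ :=
  4 * (Real.cos θ : ℂ) * dz (fun w => dzbar f w) z
    - Complex.exp (θ * Complex.I) * z * dz f z
    - Complex.exp (-θ * Complex.I) * (conj z) * dzbar f z

noncomputable def T (m n : ℕ) (r : ℕ) : ℂ :=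
  (-1 : ℂ) ^ r * (r.factorial : ℂ) * 2 ^ r * (m.choose r : ℂ) * (n.choose r : ℂ)

noncomputable def Dm (a b : ℕ) (z : ℂ) : ℂ →L[ℝ] ℂ :=
  ((a : ℂ) * z ^ (a - 1) * (conj z) ^ b) • ContinuousLinearMap.id ℝ ℂ
    + ((b : ℂ) * z ^ a * (conj z) ^ (b - 1)) • (Complex.conjCLE : ℂ →L[ℝ] ℂ)

lemma Dm_apply (a b : ℕ) (z v : ℂ) :
    Dm a b z v = (a : ℂ) * z ^ (a - 1) * (conj z) ^ b * v
      + (b : ℂ) * z ^ a * (conj z) ^ (b - 1) * conj v := by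
  simp [Dm, smul_eq_mul]

lemma hasFDerivAt_mono (a b : ℕ) (z : ℂ) :
    HasFDerivAt (fun w : ℂ => w ^ a * (conj w) ^ b) (Dm a b z) z := by
  have h1 : HasFDerivAt (fun w : ℂ => w ^ a)
      (((ContinuousLinearMap.smulRight (1 : ℂ →L[ℂ] ℂ) ((a : ℂ) * z ^ (a-1)))).restrictScalars ℝ) z :=
    ((hasDerivAt_pow a z).hasFDerivAt).restrictScalars ℝ
  have hc : HasFDerivAt (fun w : ℂ => (starRingEnd ℂ) w) (Complex.conjCLE : ℂ →L[ℝ] ℂ) z :=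
    Complex.conjCLE.hasFDerivAt
  have h2 : HasFDerivAt (fun w : ℂ => (conj w) ^ b)
      ((((ContinuousLinearMap.smulRight (1 : ℂ →L[ℂ] ℂ) ((b : ℂ) * (conj z) ^ (b-1)))).restrictScalars ℝ).comp
        (Complex.conjCLE : ℂ →L[ℝ] ℂ)) z :=
    (((hasDerivAt_pow b (conj z)).hasFDerivAt).restrictScalars ℝ).comp z hc
  have h := h1.fun_mul h2
  refine h.congr_fderiv ?_
  ext v
  simp [Dm, smul_eq_mul]
  ring

lemma hasFDerivAt_F (s : Finset ℕ) (c : ℂ) (g : ℕ → ℂ) (p q : ℕ → ℕ) (z : ℂ) :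
    HasFDerivAt (fun w : ℂ => c * ∑ r ∈ s, g r * (w ^ p r * (conj w) ^ q r))
      (c • ∑ r ∈ s, g r • Dm (p r) (q r) z) z := by
  have h : HasFDerivAt (fun w : ℂ => ∑ r ∈ s, g r * (w ^ p r * (conj w) ^ q r))
      (∑ r ∈ s, g r • Dm (p r) (q r) z) z :=
    HasFDerivAt.fun_sum fun r _ => (hasFDerivAt_mono (p r) (q r) z).const_mul (g r)
  exact h.const_mul c

lemma dz_F (s : Finset ℕ) (c : ℂ) (g : ℕ → ℂ) (p q : ℕ → ℕ) (z : ℂ) :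
    dz (fun w : ℂ => c * ∑ r ∈ s, g r * (w ^ p r * (conj w) ^ q r)) z
      = c * ∑ r ∈ s, g r * ((p r : ℂ) * z ^ (p r - 1) * (conj z) ^ q r) := by
  rw [dz, (hasFDerivAt_F s c g p q z).fderiv]
  simp only [ContinuousLinearMap.coe_smul', Pi.smul_apply, ContinuousLinearMap.coe_sum',
    Finset.sum_apply, Dm_apply, smul_eq_mul, map_one, Complex.conj_I]
  rw [Finset.mul_sum, Finset.mul_sum, Finset.mul_sum, Finset.mul_sum, ← Finset.sum_sub_distrib,
    Finset.mul_sum]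
  refine Finset.sum_congr rfl fun r _ => ?_
  linear_combination (1/2 * (g r * ((q r : ℂ) * z ^ p r * (conj z) ^ (q r - 1))
    - g r * ((p r : ℂ) * z ^ (p r - 1) * (conj z) ^ q r)) * c) * Complex.I_mul_I

lemma dzbar_F (s : Finset ℕ) (c : ℂ) (g : ℕ → ℂ) (p q : ℕ → ℕ) (z : ℂ) :
    dzbar (fun w : ℂ => c * ∑ r ∈ s, g r * (w ^ p r * (conj w) ^ q r)) z
      = c * ∑ r ∈ s, g r * ((q r : ℂ) * z ^ p r * (conj z) ^ (q r - 1)) := by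
  rw [dzbar, (hasFDerivAt_F s c g p q z).fderiv]
  simp only [ContinuousLinearMap.coe_smul', Pi.smul_apply, ContinuousLinearMap.coe_sum',
    Finset.sum_apply, Dm_apply, smul_eq_mul, map_one, Complex.conj_I]
  rw [Finset.mul_sum, Finset.mul_sum, Finset.mul_sum, Finset.mul_sum, ← Finset.sum_add_distrib,
    Finset.mul_sum]
  refine Finset.sum_congr rfl fun r _ => ?_
  linear_combination (1/2 * (g r * ((p r : ℂ) * z ^ (p r - 1) * (conj z) ^ q r)
    - g r * ((q r : ℂ) * z ^ p r * (conj z) ^ (q r - 1))) * c) * Complex.I_mul_I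

lemma nat_key (m n i : ℕ) :
    i.factorial * (m.choose i) * (n.choose i) * (m - i) * (n - i)
      = (i + 1) * (i + 1).factorial * (m.choose (i + 1)) * (n.choose (i + 1)) := by
  have hm := Nat.choose_succ_right_eq m i
  have hn := Nat.choose_succ_right_eq n i
  calc i.factorial * m.choose i * n.choose i * (m - i) * (n - i)
      = i.factorial * (m.choose i * (m - i)) * (n.choose i * (n - i)) := by ring
    _ = i.factorial * (m.choose (i+1) * (i+1)) * (n.choose (i+1) * (i+1)) := by rw [hm, hn]
    _ = (i + 1) * (i + 1).factorial * m.choose (i+1) * n.choose (i+1) := by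
        rw [Nat.factorial_succ]; ring

lemma key (m n : ℕ) (z : ℂ) :
    ∑ r ∈ Finset.range (min m n + 1),
        2 * T m n r * ((m - r : ℕ) : ℂ) * ((n - r : ℕ) : ℂ) * z ^ (m - r - 1) * (conj z) ^ (n - r - 1)
      = - ∑ r ∈ Finset.range (min m n + 1), (r : ℂ) * T m n r * z ^ (m - r) * (conj z) ^ (n - r) := by
  rw [Finset.sum_range_succ, Finset.sum_range_succ']
  have h0 : ((0 : ℕ) : ℂ) * T m n 0 * z ^ (m - 0) * (conj z) ^ (n - 0) = 0 := by simp
  rw [h0, add_zero]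
  have hlast : 2 * T m n (min m n) * ((m - min m n : ℕ) : ℂ) * ((n - min m n : ℕ) : ℂ)
      * z ^ (m - min m n - 1) * (conj z) ^ (n - min m n - 1) = 0 := by
    rcases le_total m n with h | h
    · simp [min_eq_left h]
    · simp [min_eq_right h]
  rw [hlast, add_zero, ← Finset.sum_neg_distrib]
  refine Finset.sum_congr rfl fun k hk => ?_
  rw [Nat.sub_sub, Nat.sub_sub]
  have hc := nat_key m n k
  have hcc : ((k.factorial * (m.choose k) * (n.choose k) * (m - k) * (n - k) : ℕ) : ℂ)
      = (((k + 1) * (k + 1).factorial * (m.choose (k + 1)) * (n.choose (k + 1)) : ℕ) : ℂ) := by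
    exact_mod_cast congrArg (Nat.cast : ℕ → ℂ) hc
  push_cast at hcc
  simp only [T, pow_succ]
  push_cast
  linear_combination (2 * (-1:ℂ)^k * 2^k * z ^ (m - (k+1)) * (conj z) ^ (n - (k+1))) * hcc

lemma cast_pow_aux (z : ℂ) (k : ℕ) : (k : ℂ) * z ^ (k - 1) * z = (k : ℂ) * z ^ k := by
  cases k with
  | zero => simp
  | succ k => simp [pow_succ]; ring

/-- `J_{m,n}` is an eigenfunction of the complex Ornstein–Uhlenbeck operator with
eigenvalue `-[(m+n)cosθ + i(m-n)sinθ]`. -/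
theorem J_eigenfunction (θ : ℝ) (hθ : θ ∈ Set.Ioo (-(Real.pi / 2)) (Real.pi / 2))
    (m n : ℕ) (z : ℂ) :
    LOU θ (J m n) z
      = -((((m : ℝ) + n) * Real.cos θ : ℝ) + Complex.I * ((((m : ℝ) - n) * Real.sin θ : ℝ)))
          * J m n z := by
  set C : ℂ := (Real.sqrt (m.factorial * n.factorial * 2 ^ (m + n)) : ℂ)⁻¹ with hC
  set s := Finset.range (min m n + 1) with hs
  have hJ : J m n = fun w : ℂ => C * ∑ r ∈ s, T m n r * (w ^ (m - r) * (conj w) ^ (n - r)) := by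
    funext w
    rw [J]
    exact congrArg (fun X => C * X) (Finset.sum_congr rfl fun r _ => by rw [T]; ring)
  have hdz : dz (J m n) z
      = C * ∑ r ∈ s, T m n r * (((m - r : ℕ) : ℂ) * z ^ (m - r - 1) * (conj z) ^ (n - r)) := by
    rw [hJ]; exact dz_F s C (T m n) (fun r => m - r) (fun r => n - r) z
  have hdzbar : dzbar (J m n) z
      = C * ∑ r ∈ s, T m n r * (((n - r : ℕ) : ℂ) * z ^ (m - r) * (conj z) ^ (n - r - 1)) := by
    rw [hJ]; exact dzbar_F s C (T m n) (fun r => m - r) (fun r => n - r) z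
  have hfun : (fun w => dzbar (J m n) w)
      = fun w : ℂ => C * ∑ r ∈ s, (T m n r * ((n - r : ℕ) : ℂ)) * (w ^ (m - r) * (conj w) ^ (n - r - 1)) := by
    funext w
    rw [hJ, dzbar_F s C (T m n) (fun r => m - r) (fun r => n - r) w]
    exact congrArg (fun X => C * X) (Finset.sum_congr rfl fun r _ => by ring)
  have hdd : dz (fun w => dzbar (J m n) w) z
      = C * ∑ r ∈ s, (T m n r * ((n - r : ℕ) : ℂ))
          * (((m - r : ℕ) : ℂ) * z ^ (m - r - 1) * (conj z) ^ (n - r - 1)) := by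
    rw [hfun]; exact dz_F s C (fun r => T m n r * ((n - r : ℕ) : ℂ)) (fun r => m - r) (fun r => n - r - 1) z
  rw [LOU, hdd, hdz, hdzbar]
  have hJz : J m n z = C * ∑ r ∈ s, T m n r * (z ^ (m - r) * (conj z) ^ (n - r)) := by
    rw [hJ]
  rw [hJz]
  -- abbreviations
  have hE : Complex.exp (θ * Complex.I) = (Real.cos θ : ℂ) + (Real.sin θ : ℂ) * Complex.I := by
    rw [Complex.exp_mul_I, ← Complex.ofReal_cos, ← Complex.ofReal_sin]
  have hE' : Complex.exp (-θ * Complex.I) = (Real.cos θ : ℂ) - (Real.sin θ : ℂ) * Complex.I := by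
    rw [Complex.exp_mul_I, Complex.cos_neg, Complex.sin_neg, ← Complex.ofReal_cos,
      ← Complex.ofReal_sin]
    ring
  rw [hE, hE']
  simp only [Complex.ofReal_mul, Complex.ofReal_add, Complex.ofReal_sub, Complex.ofReal_natCast]
  set cc : ℂ := (Real.cos θ : ℂ)
  set ss : ℂ := (Real.sin θ : ℂ)
  -- main sum identity
  have e1 : (4 : ℂ) * cc * (∑ r ∈ s, (T m n r * ((n - r : ℕ) : ℂ))
        * (((m - r : ℕ) : ℂ) * z ^ (m - r - 1) * (conj z) ^ (n - r - 1)))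
      = 2 * cc * ∑ r ∈ s,
          2 * T m n r * ((m - r : ℕ) : ℂ) * ((n - r : ℕ) : ℂ) * z ^ (m - r - 1) * (conj z) ^ (n - r - 1) := by
    rw [Finset.mul_sum, Finset.mul_sum]
    exact Finset.sum_congr rfl fun r _ => by ring
  have hkey := key m n z
  have h2 : 2 * cc * (∑ r ∈ s, (r : ℂ) * T m n r * z ^ (m - r) * (conj z) ^ (n - r))
        + (cc + ss * Complex.I) * z * (∑ r ∈ s, T m n r * (((m - r : ℕ) : ℂ) * z ^ (m - r - 1) * (conj z) ^ (n - r)))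
        + (cc - ss * Complex.I) * (conj z) * (∑ r ∈ s, T m n r * (((n - r : ℕ) : ℂ) * z ^ (m - r) * (conj z) ^ (n - r - 1)))
      = (((m : ℂ) + n) * cc + Complex.I * (((m : ℂ) - n) * ss))
          * ∑ r ∈ s, T m n r * (z ^ (m - r) * (conj z) ^ (n - r)) := by
    rw [Finset.mul_sum, Finset.mul_sum, Finset.mul_sum, Finset.mul_sum,
      ← Finset.sum_add_distrib, ← Finset.sum_add_distrib]
    refine Finset.sum_congr rfl fun r hr => ?_
    have hr' : r ≤ min m n := Nat.lt_succ_iff.mp (Finset.mem_range.mp hr)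
    have hrm : r ≤ m := le_trans hr' (min_le_left m n)
    have hrn : r ≤ n := le_trans hr' (min_le_right m n)
    have P1 := cast_pow_aux z (m - r)
    have P2 := cast_pow_aux (conj z) (n - r)
    rw [Nat.cast_sub hrm] at P1 ⊢
    rw [Nat.cast_sub hrn] at P2 ⊢
    linear_combination ((cc + ss * Complex.I) * T m n r * (conj z) ^ (n - r)) * P1
      + ((cc - ss * Complex.I) * T m n r * z ^ (m - r)) * P2
  linear_combination C * e1 + (2 * cc * C) * hkey - C * h2
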